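/- arXiv:2412.15026 — 2 statements merged into one kernel-verified Lean document; each statement's English description precedes it below -/
import Mathlib

section
/- Let p ∈ (0,∞], r ∈ (0,∞), s ∈ (ℝ∖{0}) ∪ {∞} with p ≥ r, 1/p ≥ 1/s, and let W : ℝ^d → L(H) be a matrix weight with [W]_{p,(r,s),op} := sup_Q ( ⨍_Q ( ⨍_Q ‖W(x)W(y)^{-1}‖^{t} dy )^{q/t} dx )^{1/q} < ∞, where 1/t = 1/r − 1/p and 1/q = 1/p − 1/s. Set 1/p̂ := 1/r + 1/s − 1/p. Then [W^{-1}]_{p̂,(r,s),op} < ∞, and [W^{-1}]_{p̂,(r,s),op} ≍ [W]_{p,(r,s),op} with implicit constants depending only on r, s, and dim H. -/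
open MeasureTheory ENNReal

/-- The axis-parallel cube in `ℝ^d` with corner `a` and side length `ℓ`. -/
def cube {d : ℕ} (a : Fin d → ℝ) (ℓ : ℝ) : Set (Fin d → ℝ) :=
  {x | ∀ i, a i ≤ x i ∧ x i ≤ a i + ℓ}

/-- The normalized Lebesgue measure on the cube `Q = cube a ℓ` (so that integrals against it are
averages `⨍_Q`). -/
noncomputable def cubeAvg {d : ℕ} (a : Fin d → ℝ) (ℓ : ℝ) : Measure (Fin d → ℝ) :=
  (volume (cube a ℓ))⁻¹ • volume.restrict (cube a ℓ)

/-- The `L^t(ν)`-"norm" `(∫ g^t dν)^{1/t}` of an `ℝ≥0∞`-valued function, for `t ∈ (0,∞]`,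
interpreted as the essential supremum when `t = ∞`.  Applied with `ν = cubeAvg a ℓ` this is the
average `(⨍_Q g^t)^{1/t}`. -/
noncomputable def avgLp {α : Type*} [MeasurableSpace α] (ν : Measure α) (t : ℝ≥0∞)
    (g : α → ℝ≥0∞) : ℝ≥0∞ :=
  if t = ⊤ then essSup g ν else (∫⁻ x, g x ^ t.toReal ∂ν) ^ (1 / t.toReal)

/-- The two-parameter Roudenko-type characteristic
`sup_Q ( ⨍_Q ( ⨍_Q A x y ^ t dy )^{q/t} dx )^{1/q}` of a kernel `A` (typically
`A x y = ‖W(x) W(y)⁻¹‖`), with inner exponent `t` and outer exponent `q`. -/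
noncomputable def twoChar {d : ℕ} (A : (Fin d → ℝ) → (Fin d → ℝ) → ℝ≥0∞)
    (t q : ℝ≥0∞) : ℝ≥0∞ :=
  ⨆ (a : Fin d → ℝ) (ℓ : ℝ) (_ : 0 < ℓ),
    avgLp (cubeAvg a ℓ) q fun x => avgLp (cubeAvg a ℓ) t fun y => A x y

/-! The reducing operator `K` of the quasinorm `u ↦ ‖W⁻¹(·) u‖_{L^t(Q)}` (obtained, as a
John-ellipsoid substitute, from a basis that maximises the determinant on the quasinorm unit
ball up to a factor `2`) satisfies `‖K M‖ ≍ ‖W⁻¹(·) M‖_{L^t(Q)}` for every operator `M`.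
Splitting `‖W⁻¹(x) W(y)‖ = ‖(W(y) K*) (K*⁻¹ W⁻¹(x))‖` and using self-adjointness, the `L^q_y`
factor is controlled by the characteristic of `W` and the `L^t_x` factor by `‖K K⁻¹‖ ≤ 1`.
The exponent pairs of `p` and `p̂` are `(t, q)` and `(q, t)`, so applying this to `(W, W⁻¹)`
and to `(W⁻¹, W)` gives both inequalities. -/

open Filter Module
open scoped NNReal RealInnerProductSpace

theorem Finset.le_pow_card_mul_sum_of_quasiSubadditive_on_pred {ι M R : Type*}
    [AddCommMonoid M] [CommSemiring R] [PartialOrder R] [IsOrderedRing R]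
    (f : M → R) (p : M → Prop) {κ : R} (hκ : 1 ≤ κ) (hf : ∀ x, 0 ≤ f x) (h_zero : f 0 = 0)
    (h_add : ∀ x y, p x → p y → f (x + y) ≤ κ * (f x + f y))
    (hp_zero : p 0) (hp_add : ∀ x y, p x → p y → p (x + y))
    (g : ι → M) {s : Finset ι} (hs : ∀ i ∈ s, p (g i)) :
    f (∑ i ∈ s, g i) ≤ κ ^ s.card * ∑ i ∈ s, f (g i) := by
  classical
  induction s using Finset.induction_on with
  | empty => simp [h_zero]
  | insert a s ha ih =>
    have hs' : ∀ i ∈ s, p (g i) := fun i hi => hs i (Finset.mem_insert_of_mem hi)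
    have hsum : p (∑ i ∈ s, g i) := Finset.sum_induction _ p hp_add hp_zero hs'
    have hκ_pow : κ ≤ κ ^ (s.card + 1) := le_self_pow₀ hκ (Nat.succ_ne_zero _)
    rw [Finset.sum_insert ha, Finset.sum_insert ha, Finset.card_insert_of_notMem ha, mul_add]
    calc f (g a + ∑ i ∈ s, g i)
        ≤ κ * f (g a) + κ * f (∑ i ∈ s, g i) := by
          rw [← mul_add]
          exact h_add _ _ (hs a (Finset.mem_insert_self a s)) hsum
      _ ≤ κ ^ (s.card + 1) * f (g a) + κ * (κ ^ s.card * ∑ i ∈ s, f (g i)) :=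
          add_le_add (mul_le_mul_of_nonneg_right hκ_pow (hf _))
            (mul_le_mul_of_nonneg_left (ih hs') (zero_le_one.trans hκ))
      _ = _ := by rw [← mul_assoc, ← pow_succ']

theorem one_le_LpAddConst (p : ℝ≥0∞) : 1 ≤ LpAddConst p := by
  rw [LpAddConst]
  split_ifs with h
  · have hexp : 0 ≤ 1 / p.toReal - 1 := by
      rw [one_div, sub_nonneg, ← ENNReal.toReal_inv, ← ENNReal.toReal_one]
      exact ENNReal.toReal_mono (by simpa using h.1.ne') (ENNReal.one_le_inv.2 h.2.le)
    simpa using ENNReal.rpow_le_rpow_of_exponent_le one_le_two hexp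
  · exact le_rfl

theorem LpAddConst_le_two_rpow {t : ℝ≥0∞} {B : ℝ} (hB : 0 ≤ B) (ht : t⁻¹ ≤ ENNReal.ofReal B) :
    LpAddConst t ≤ 2 ^ B := by
  unfold LpAddConst
  split_ifs with h
  · gcongr
    · norm_num
    · rw [one_div, ← ENNReal.toReal_inv]
      linarith [ENNReal.toReal_le_of_le_ofReal hB ht]
  · simpa using ENNReal.rpow_le_rpow_of_exponent_le one_le_two hB

section eLpNorm

variable {α E G : Type*} [MeasurableSpace α] {ν : Measure α} {p : ℝ≥0∞}
  [NormedAddCommGroup E] [NormedSpace ℝ E] [NormedAddCommGroup G] [NormedSpace ℝ G]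

theorem eLpNorm_sum_le_pow_card_mul {ι ε : Type*} [TopologicalSpace ε]
    [ESeminormedAddCommMonoid ε] [ContinuousAdd ε] {κ : ℝ≥0∞} (hκ : LpAddConst p ≤ κ)
    {f : ι → α → ε} {s : Finset ι} (hf : ∀ i ∈ s, AEStronglyMeasurable (f i) ν) :
    eLpNorm (∑ i ∈ s, f i) p ν ≤ κ ^ s.card * ∑ i ∈ s, eLpNorm (f i) p ν := by
  refine Finset.le_pow_card_mul_sum_of_quasiSubadditive_on_pred (fun g : α → ε => eLpNorm g p ν)
    (AEStronglyMeasurable · ν) ((one_le_LpAddConst p).trans hκ) (fun _ => zero_le) eLpNorm_zero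
    ?_ aestronglyMeasurable_zero (fun _ _ hf hg => hf.add hg) f hf
  intro g h hg hh
  exact (eLpNorm_add_le' hg hh p).trans (mul_le_mul_left hκ _)

theorem eLpNorm_apply_le (F : α → E →L[ℝ] G) (x : E) :
    eLpNorm (fun y => F y x) p ν ≤ eLpNorm F p ν * ‖x‖ₑ := by
  calc eLpNorm (fun y => F y x) p ν ≤ eLpNorm (‖x‖ • F) p ν := eLpNorm_mono_enorm fun y => by
        simpa [enorm_smul, mul_comm] using (F y).le_opENorm x
    _ = eLpNorm F p ν * ‖x‖ₑ := by rw [eLpNorm_const_smul ‖x‖ F, enorm_norm, mul_comm]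

theorem frequently_ne_top_of_eLpNorm_ne_top [NeZero ν] (hp : p ≠ 0) {g : α → ℝ≥0∞}
    (h : eLpNorm g p ν ≠ ⊤) :
    ∃ᵐ x ∂ν, g x ≠ ⊤ := fun hall => h <| by
  rw [eLpNorm_congr_enorm_ae (g := fun _ => (⊤ : ℝ≥0∞)) (hall.mono fun x hx => not_not.mp hx),
    eLpNorm_const _ hp (NeZero.ne ν)]
  exact ENNReal.top_mul (by simp [ENNReal.rpow_eq_zero_iff, NeZero.ne ν])

end eLpNorm

theorem OrthonormalBasis.abs_repr_apply_le_norm {ι V : Type*} [Fintype ι] [NormedAddCommGroup V]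
    [InnerProductSpace ℝ V] (b : OrthonormalBasis ι ℝ V) (u : V) (i : ι) : |b.repr u i| ≤ ‖u‖ := by
  simpa [← Real.norm_eq_abs] using PiLp.norm_apply_le (b.repr u) i

theorem OrthonormalBasis.enorm_le_sum_enorm_apply {ι E G : Type*} [Fintype ι]
    [NormedAddCommGroup E] [InnerProductSpace ℝ E] [NormedAddCommGroup G] [NormedSpace ℝ G]
    (b : OrthonormalBasis ι ℝ E) (T : E →L[ℝ] G) : ‖T‖ₑ ≤ ∑ i, ‖T (b i)‖ₑ := by
  refine T.opENorm_le_bound fun x => ?_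
  conv_lhs => rw [← b.sum_repr x]
  rw [map_sum, Finset.sum_mul]
  refine (enorm_sum_le _ _).trans (Finset.sum_le_sum fun i _ => ?_)
  rw [map_smul, enorm_smul, mul_comm]
  gcongr
  rw [← ofReal_norm, ← ofReal_norm, Real.norm_eq_abs]
  exact ENNReal.ofReal_le_ofReal (b.abs_repr_apply_le_norm x i)

theorem OrthonormalBasis.sum_enorm_apply_le {ι E G : Type*} [Fintype ι]
    [NormedAddCommGroup E] [InnerProductSpace ℝ E] [NormedAddCommGroup G] [NormedSpace ℝ G]
    (b : OrthonormalBasis ι ℝ E) (T : E →L[ℝ] G) :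
    ∑ i, ‖T (b i)‖ₑ ≤ Fintype.card ι * ‖T‖ₑ := by
  calc ∑ i, ‖T (b i)‖ₑ ≤ ∑ _i : ι, ‖T‖ₑ := Finset.sum_le_sum fun i _ =>
        (T.le_opENorm (b i)).trans_eq
          (by rw [← ofReal_norm (b i), b.norm_eq_one, ofReal_one, mul_one])
    _ = Fintype.card ι * ‖T‖ₑ := by simp

theorem enorm_star_mul_star {R : Type*} [NormedRing R] [StarRing R] [NormedStarGroup R] (a b : R) :
    ‖star a * star b‖ₑ = ‖b * a‖ₑ := by
  rw [← star_mul, enorm_eq_nnnorm, enorm_eq_nnnorm, nnnorm_star]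

theorem IsSelfAdjoint.enorm_mul_comm {R : Type*} [NormedRing R] [StarRing R] [NormedStarGroup R]
    {a b : R} (ha : IsSelfAdjoint a) (hb : IsSelfAdjoint b) : ‖a * b‖ₑ = ‖b * a‖ₑ := by
  simpa [ha.star_eq, hb.star_eq] using (enorm_star_mul_star b a).symm

theorem IsSelfAdjoint.enorm_mul_le_mul_star {R : Type*} [NormedRing R] [StarRing R]
    [NormedStarGroup R] {a b k k' : R} (ha : IsSelfAdjoint a) (hb : IsSelfAdjoint b)
    (hk : k' * k = 1) : ‖a * b‖ₑ ≤ ‖b * star k‖ₑ * ‖star k' * a‖ₑ := by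
  calc ‖a * b‖ₑ = ‖(b * star k) * (star k' * a)‖ₑ := by
        rw [ha.enorm_mul_comm hb, mul_assoc, ← mul_assoc (star k), ← star_mul, hk, star_one,
          one_mul]
    _ ≤ ‖b * star k‖ₑ * ‖star k' * a‖ₑ := by
        simpa only [enorm_eq_nnnorm, ← ENNReal.coe_mul, ENNReal.coe_le_coe]
          using nnnorm_mul_le _ _

theorem IsSelfAdjoint.of_mul_eq_one {R : Type*} [Monoid R] [StarMul R] {a b : R}
    (ha : IsSelfAdjoint a) (hab : a * b = 1) : IsSelfAdjoint b :=
  left_inv_eq_right_inv (by rw [← ha.star_eq, ← star_mul, hab, star_one]) hab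

theorem Module.Basis.continuous_det {ι V : Type*} [Fintype ι] [DecidableEq ι]
    [NormedAddCommGroup V] [NormedSpace ℝ V] [FiniteDimensional ℝ V] (b : Basis ι ℝ V) :
    Continuous fun v : ι → V => b.det v := by
  simp_rw [b.det_apply]
  exact Continuous.matrix_det (continuous_matrix fun i j =>
    (b.coord i).continuous_of_finiteDimensional.comp (continuous_apply j))

theorem Module.Basis.det_mul_mk_repr {ι M : Type*} [Fintype ι] [DecidableEq ι] [AddCommGroup M]
    [Module ℝ M] (b : Basis ι ℝ M) {v : ι → M} (hli : LinearIndependent ℝ v)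
    (hsp : ⊤ ≤ Submodule.span ℝ (Set.range v)) (u : M) (i : ι) :
    b.det v * (Basis.mk hli hsp).repr u i = b.det (Function.update v i u) := by
  simpa only [LinearMap.smul_apply, Basis.coord_apply, smul_eq_mul,
    MultilinearMap.toLinearMap_apply, AlternatingMap.coe_multilinearMap]
    using congr($(b.det_smul_mk_coord_eq_det_update hli hsp i) u)

structure IsQuasinorm {V : Type*} [AddCommGroup V] [Module ℝ V] (κ : ℝ) (ρ : V → ℝ) : Prop where
  nonneg : ∀ u, 0 ≤ ρ u
  smul : ∀ (c : ℝ) (u : V), ρ (c • u) = |c| * ρ u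
  add_le : ∀ u v, ρ (u + v) ≤ κ * (ρ u + ρ v)
  pos : ∀ u, u ≠ 0 → 0 < ρ u

namespace IsQuasinorm

section Module

variable {V : Type*} [AddCommGroup V] [Module ℝ V] {κ : ℝ} {ρ : V → ℝ}

theorem map_zero (hρ : IsQuasinorm κ ρ) : ρ 0 = 0 := by
  simpa using hρ.smul 0 0

theorem le_pow_mul_sum_abs_repr (hρ : IsQuasinorm κ ρ) (hκ : 1 ≤ κ) {ι : Type*} [Fintype ι]
    (e : Basis ι ℝ V) (u : V) :
    ρ u ≤ κ ^ Fintype.card ι * ∑ i, |e.repr u i| * ρ (e i) := by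
  conv_lhs => rw [← e.sum_repr u]
  simpa only [hρ.smul, Finset.card_univ] using
    Finset.le_pow_card_mul_sum_of_quasiSubadditive_on_pred ρ (fun _ => True) hκ hρ.nonneg
      hρ.map_zero (fun u v _ _ => hρ.add_le u v) trivial (fun _ _ _ _ => trivial)
      (fun i => e.repr u i • e i) (s := Finset.univ) fun _ _ => trivial

theorem abs_le_mul_of_forall_le_one (hρ : IsQuasinorm κ ρ) (f : V →ₗ[ℝ] ℝ) {C : ℝ}
    (h : ∀ u, ρ u ≤ 1 → |f u| ≤ C) (u : V) : |f u| ≤ C * ρ u := by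
  rcases eq_or_ne u 0 with rfl | hu
  · simp [hρ.map_zero]
  have hρu := hρ.pos u hu
  have := h ((ρ u)⁻¹ • u) (by rw [hρ.smul, abs_of_pos (inv_pos.mpr hρu), inv_mul_cancel₀ hρu.ne'])
  rwa [map_smul, smul_eq_mul, abs_mul, abs_of_pos (inv_pos.mpr hρu), inv_mul_le_iff₀ hρu,
    mul_comm] at this

end Module

variable {V : Type*} [NormedAddCommGroup V] [InnerProductSpace ℝ V] [FiniteDimensional ℝ V]
  {κ : ℝ} {ρ : V → ℝ}

theorem exists_le_mul_norm (hρ : IsQuasinorm κ ρ) (hκ : 1 ≤ κ) : ∃ M, ∀ u, ρ u ≤ M * ‖u‖ := by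
  let b := stdOrthonormalBasis ℝ V
  refine ⟨κ ^ finrank ℝ V * ∑ i, ρ (b i), fun u => ?_⟩
  calc ρ u ≤ κ ^ finrank ℝ V * ∑ i, |b.repr u i| * ρ (b i) := by
        simpa using hρ.le_pow_mul_sum_abs_repr hκ b.toBasis u
    _ ≤ κ ^ finrank ℝ V * ∑ i, ‖u‖ * ρ (b i) := by
        gcongr with i
        · exact hρ.nonneg _
        · exact b.abs_repr_apply_le_norm u i
    _ = _ := by rw [← Finset.mul_sum]; ring

theorem exists_pos_mul_norm_le (hρ : IsQuasinorm κ ρ) (hκ : 1 ≤ κ) :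
    ∃ m > 0, ∀ u, m * ‖u‖ ≤ ρ u := by
  obtain ⟨M, hM⟩ := hρ.exists_le_mul_norm hκ
  by_contra! h
  choose u hu using fun k : ℕ => h (1 / (k + 1)) (by positivity)
  have hu0 : ∀ k, u k ≠ 0 := fun k h0 => by simpa [h0, hρ.map_zero] using hu k
  set w : ℕ → V := fun k => ‖u k‖⁻¹ • u k
  have hw_mem : ∀ k, w k ∈ Metric.sphere (0 : V) 1 := fun k => by
    simp [w, norm_smul, hu0 k]
  have hw_small : ∀ k : ℕ, ρ (w k) ≤ 1 / ((k : ℝ) + 1) := fun k => by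
    have hpos : 0 < ‖u k‖ := norm_pos_iff.mpr (hu0 k)
    rw [hρ.smul, abs_of_pos (inv_pos.mpr hpos), inv_mul_le_iff₀ hpos, mul_comm]
    exact (hu k).le
  obtain ⟨w₀, hw₀, φ, hφ, hlim⟩ := (isCompact_sphere (0 : V) 1).tendsto_subseq hw_mem
  have hbound : ∀ k, ρ w₀ ≤ κ * (1 / (φ k + 1) + M * ‖w (φ k) - w₀‖) := fun k => by
    calc ρ w₀ = ρ (w (φ k) + (w₀ - w (φ k))) := by rw [add_sub_cancel]
      _ ≤ κ * (ρ (w (φ k)) + ρ (w₀ - w (φ k))) := hρ.add_le _ _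
      _ ≤ κ * (1 / (φ k + 1) + M * ‖w (φ k) - w₀‖) := by
        gcongr
        · exact hw_small (φ k)
        · rw [norm_sub_rev]; exact hM _
  have hbound_lim : Tendsto (fun k => κ * (1 / ((φ k : ℕ) + 1 : ℝ) + M * ‖w (φ k) - w₀‖))
      atTop (nhds (κ * (0 + M * 0))) :=
    ((tendsto_one_div_add_atTop_nhds_zero_nat.comp hφ.tendsto_atTop).add
      ((tendsto_iff_norm_sub_tendsto_zero.mp hlim).const_mul M)).const_mul κ
  have hρw₀ : ρ w₀ ≤ 0 := by simpa using ge_of_tendsto' hbound_lim hbound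
  exact (hρ.pos w₀ (by rintro rfl; simp at hw₀)).not_ge hρw₀

theorem bddAbove_abs_det (hρ : IsQuasinorm κ ρ) (hκ : 1 ≤ κ) {ι : Type*} [Fintype ι]
    [DecidableEq ι] (b : Basis ι ℝ V) :
    BddAbove ((fun v => |b.det v|) '' Set.univ.pi fun _ => {u | ρ u ≤ 1}) := by
  obtain ⟨m, hm, hmρ⟩ := hρ.exists_pos_mul_norm_le hκ
  have hsub : (Set.univ.pi fun _ => {u | ρ u ≤ 1}) ⊆
      Set.univ.pi fun (_ : ι) => Metric.closedBall (0 : V) m⁻¹ := fun v hv i _ => by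
    rw [mem_closedBall_zero_iff, ← one_div, le_div_iff₀' hm]
    exact (hmρ _).trans (hv i trivial)
  exact ((isCompact_univ_pi fun _ => isCompact_closedBall (0 : V) m⁻¹).bddAbove_image
    (continuous_abs.comp b.continuous_det).continuousOn).mono (Set.image_mono hsub)

theorem exists_basis_abs_repr_le (hρ : IsQuasinorm κ ρ) (hκ : 1 ≤ κ) :
    ∃ e : Basis (Fin (finrank ℝ V)) ℝ V, (∀ i, ρ (e i) ≤ 1) ∧ ∀ u i, |e.repr u i| ≤ 2 * ρ u := by
  classical
  set K : Set (Fin (finrank ℝ V) → V) := Set.univ.pi fun _ => {u | ρ u ≤ 1}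
  let b₀ := Module.finBasis ℝ V
  have hb₀ : ∀ i, IsUnit (ρ (b₀ i))⁻¹ := fun i =>
    (inv_pos.mpr (hρ.pos _ (b₀.ne_zero i))).ne'.isUnit
  let b := b₀.isUnitSMul hb₀
  have hbK : ⇑b ∈ K := fun i _ => by
    have := hρ.pos _ (b₀.ne_zero i)
    simp [b, Basis.isUnitSMul_apply, hρ.smul, abs_of_pos this, inv_mul_cancel₀ this.ne']
  have hbdd : BddAbove ((fun v => |b.det v|) '' K) := hρ.bddAbove_abs_det hκ b
  set D := sSup ((fun v => |b.det v|) '' K)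
  have hD : 1 ≤ D := le_csSup hbdd ⟨b, hbK, show |b.det b| = 1 by rw [Basis.det_self, abs_one]⟩
  have hD_half : D / 2 < D := by linarith
  obtain ⟨_, ⟨v, hvK, rfl⟩, hv⟩ :=
    exists_lt_of_lt_csSup (Set.Nonempty.image (fun v => |b.det v|) ⟨b, hbK⟩) hD_half
  have hv0 : 0 < |b.det v| := by linarith
  obtain ⟨hli, hsp⟩ := b.is_basis_iff_det.mpr (isUnit_iff_ne_zero.mpr (abs_pos.mp hv0))
  set e := Basis.mk hli hsp.ge
  -- Cramer's rule, and `v` maximises `|det|` on `K` up to a factor `2`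
  have hcoord : ∀ i u, ρ u ≤ 1 → |e.coord i u| ≤ 2 := by
    intro i u hu
    have hupd : Function.update v i u ∈ K := by
      intro j _
      rcases eq_or_ne j i with rfl | hj
      · simpa using hu
      · simpa [hj] using hvK j trivial
    have : |b.det v| * |e.coord i u| ≤ |b.det v| * 2 := by
      rw [← abs_mul, Basis.coord_apply, b.det_mul_mk_repr]
      linarith [le_csSup hbdd ⟨_, hupd, rfl⟩]
    exact le_of_mul_le_mul_left this hv0
  exact ⟨e, fun i => by simpa [e] using hvK i trivial,
    fun u i => hρ.abs_le_mul_of_forall_le_one (e.coord i) (hcoord i) u⟩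

theorem exists_continuousLinearMap_le_norm_le (hρ : IsQuasinorm κ ρ) (hκ : 1 ≤ κ) :
    ∃ L : V →L[ℝ] V, ∀ u, ρ u ≤ ‖L u‖ ∧
      ‖L u‖ ≤ 2 * finrank ℝ V ^ 2 * κ ^ finrank ℝ V * ρ u := by
  set n := finrank ℝ V
  obtain ⟨e, he_le, he_repr⟩ := hρ.exists_basis_abs_repr_le hκ
  let b := stdOrthonormalBasis ℝ V
  let L₀ : V →L[ℝ] V := LinearMap.toContinuousLinearMap (e.constr ℝ b)
  have hL₀ : ∀ u, L₀ u = ∑ i, e.repr u i • b i := fun u => by simp [L₀]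
  have hcoord_le : ∀ u i, |e.repr u i| ≤ ‖L₀ u‖ := fun u i => by
    have : b.repr (L₀ u) i = e.repr u i := by
      rw [hL₀, b.repr_apply_apply, b.orthonormal.inner_right_fintype]
    exact this ▸ b.abs_repr_apply_le_norm (L₀ u) i
  have hL₀_le : ∀ u, ‖L₀ u‖ ≤ ∑ i, |e.repr u i| := fun u => by
    rw [hL₀]
    refine (norm_sum_le _ _).trans_eq (Finset.sum_congr rfl fun i _ => ?_)
    rw [norm_smul, b.norm_eq_one, mul_one, Real.norm_eq_abs]
  have hκn : 0 ≤ κ ^ n * n := by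
    have := zero_le_one.trans hκ
    positivity
  refine ⟨(κ ^ n * n) • L₀, fun u => ?_⟩
  rw [smul_apply, norm_smul, Real.norm_eq_abs, abs_of_nonneg hκn]
  constructor
  · calc ρ u ≤ κ ^ n * ∑ i, |e.repr u i| * ρ (e i) := by
          simpa using hρ.le_pow_mul_sum_abs_repr hκ e u
      _ ≤ κ ^ n * ∑ _i : Fin n, ‖L₀ u‖ := by
          gcongr with i
          exact (mul_le_of_le_one_right (abs_nonneg _) (he_le i)).trans (hcoord_le u i)
      _ = κ ^ n * n * ‖L₀ u‖ := by simp [mul_assoc]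
  · calc κ ^ n * n * ‖L₀ u‖ ≤ κ ^ n * n * ∑ _i : Fin n, 2 * ρ u := by
          gcongr
          exact (hL₀_le u).trans (Finset.sum_le_sum fun i _ => he_repr u i)
      _ = 2 * n ^ 2 * κ ^ n * ρ u := by simp; ring

end IsQuasinorm

section ReducingOperator

variable {α : Type*} [MeasurableSpace α] {ν : Measure α} [NeZero ν] {p : ℝ≥0∞} {κ : ℝ≥0}

theorem isQuasinorm_toReal_eLpNorm {V E : Type*} [NormedAddCommGroup V] [NormedSpace ℝ V]
    [NormedAddCommGroup E] [NormedSpace ℝ E] {F : α → V →L[ℝ] E} (hF : AEStronglyMeasurable F ν)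
    (hinj : ∀ᵐ y ∂ν, Function.Injective (F y)) (hp : p ≠ 0) (hκ : LpAddConst p ≤ κ)
    (hfin : ∀ u, eLpNorm (fun y => F y u) p ν ≠ ⊤) :
    IsQuasinorm κ fun u => (eLpNorm (fun y => F y u) p ν).toReal where
  nonneg _ := ENNReal.toReal_nonneg
  smul c u := by
    simp only [map_smul]
    rw [show (fun y => c • F y u) = c • fun y => F y u from rfl, eLpNorm_const_smul,
      ENNReal.toReal_mul, toReal_enorm, Real.norm_eq_abs]
  add_le u v := by
    simp only [map_add]
    rw [← ENNReal.toReal_add (hfin u) (hfin v), ← ENNReal.coe_toReal κ, ← ENNReal.toReal_mul]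
    refine ENNReal.toReal_mono
      (ENNReal.mul_ne_top coe_ne_top (ENNReal.add_ne_top.mpr ⟨hfin u, hfin v⟩)) ?_
    exact (eLpNorm_add_le' (hF.apply_continuousLinearMap u) (hF.apply_continuousLinearMap v)
      p).trans (mul_le_mul_left hκ _)
  pos u hu := by
    refine ENNReal.toReal_pos (fun h0 => ?_) (hfin u)
    rw [eLpNorm_eq_zero_iff (hF.apply_continuousLinearMap u) hp] at h0
    obtain ⟨y, hy0, hy⟩ := (h0.and hinj).exists
    exact hu (hy (hy0.trans (F y).map_zero.symm))

theorem exists_isUnit_eLpNorm_le_enorm_le {V : Type*} [NormedAddCommGroup V]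
    [InnerProductSpace ℝ V] [FiniteDimensional ℝ V] {F : α → V →L[ℝ] V}
    (hF : AEStronglyMeasurable F ν) (hinj : ∀ᵐ y ∂ν, Function.Injective (F y)) (hp : p ≠ 0)
    (hκ : LpAddConst p ≤ κ) (hfin : ∀ u, eLpNorm (fun y => F y u) p ν ≠ ⊤) :
    ∃ L : V →L[ℝ] V, IsUnit L ∧ ∀ u, eLpNorm (fun y => F y u) p ν ≤ ‖L u‖ₑ ∧
      ‖L u‖ₑ ≤ (2 * finrank ℝ V ^ 2 * κ ^ finrank ℝ V : ℝ≥0) * eLpNorm (fun y => F y u) p ν := by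
  have hκ1 : (1 : ℝ) ≤ κ := by exact_mod_cast (one_le_LpAddConst p).trans hκ
  have hρ := isQuasinorm_toReal_eLpNorm hF hinj hp hκ hfin
  obtain ⟨L, hL⟩ := hρ.exists_continuousLinearMap_le_norm_le hκ1
  have hL_inj : Function.Injective L := (injective_iff_map_eq_zero L).mpr fun u hu => by
    by_contra h
    exact (hρ.pos u h).not_ge (by simpa [hu] using (hL u).1)
  refine ⟨L, L.isUnit_iff_bijective.mpr ⟨hL_inj, LinearMap.injective_iff_surjective.mp hL_inj⟩,
    fun u => ⟨?_, ?_⟩⟩ <;> rw [← ofReal_norm, ← ENNReal.ofReal_toReal (hfin u)]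
  · exact ENNReal.ofReal_le_ofReal (hL u).1
  · refine (ENNReal.ofReal_le_ofReal (hL u).2).trans_eq ?_
    rw [ENNReal.ofReal_mul (by positivity)]
    norm_cast
    rw [ENNReal.ofReal_coe_nnreal]

theorem exists_reducingOperator {V : Type*} [NormedAddCommGroup V] [InnerProductSpace ℝ V]
    [FiniteDimensional ℝ V] {F : α → V →L[ℝ] V} (hF : AEStronglyMeasurable F ν)
    (hinj : ∀ᵐ y ∂ν, Function.Injective (F y)) (hp : p ≠ 0) (hκ : LpAddConst p ≤ κ)
    (hfin : ∀ u, eLpNorm (fun y => F y u) p ν ≠ ⊤) :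
    ∃ L : V →L[ℝ] V, IsUnit L ∧ ∀ M : V →L[ℝ] V,
      ‖L * M‖ₑ ≤ (2 * finrank ℝ V ^ 2 * κ ^ finrank ℝ V : ℝ≥0) * eLpNorm (fun y => F y * M) p ν ∧
      eLpNorm (fun y => F y * M) p ν ≤ (finrank ℝ V * κ ^ finrank ℝ V : ℝ≥0) * ‖L * M‖ₑ := by
  set n := finrank ℝ V
  obtain ⟨L, hL_unit, hL⟩ := exists_isUnit_eLpNorm_le_enorm_le hF hinj hp hκ hfin
  let b := stdOrthonormalBasis ℝ V
  refine ⟨L, hL_unit, fun M => ⟨(L * M).opENorm_le_bound fun x => ?_, ?_⟩⟩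
  · calc ‖L (M x)‖ₑ ≤ (2 * n ^ 2 * κ ^ n : ℝ≥0) * eLpNorm (fun y => F y (M x)) p ν := (hL _).2
      _ ≤ (2 * n ^ 2 * κ ^ n : ℝ≥0) * (eLpNorm (fun y => F y * M) p ν * ‖x‖ₑ) := by
          gcongr
          exact eLpNorm_apply_le (fun y => F y * M) x
      _ = _ := by ring
  · calc eLpNorm (fun y => F y * M) p ν
        ≤ eLpNorm (∑ i, fun y => ‖F y (M (b i))‖ₑ) p ν := eLpNorm_mono_enorm fun y => by
          simpa using b.enorm_le_sum_enorm_apply (F y * M)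
      _ ≤ κ ^ n * ∑ i, eLpNorm (fun y => ‖F y (M (b i))‖ₑ) p ν := by
          have hmeas : ∀ i ∈ Finset.univ, AEStronglyMeasurable (fun y => ‖F y (M (b i))‖ₑ) ν :=
            fun i _ => (hF.apply_continuousLinearMap (M (b i))).enorm.aestronglyMeasurable
          simpa using eLpNorm_sum_le_pow_card_mul hκ hmeas
      _ ≤ κ ^ n * ∑ i, ‖(L * M) (b i)‖ₑ := by
          gcongr with i
          rw [eLpNorm_enorm]
          exact (hL _).1
      _ ≤ κ ^ n * (n * ‖L * M‖ₑ) := by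
          gcongr
          simpa using b.sum_enorm_apply_le (L * M)
      _ = _ := by push_cast; ring

end ReducingOperator

section Swap

variable {α V : Type*} [MeasurableSpace α] {ν : Measure α} [NeZero ν]
  [NormedAddCommGroup V] [InnerProductSpace ℝ V] [FiniteDimensional ℝ V]
  {W Winv : α → V →L[ℝ] V} {t q : ℝ≥0∞}

theorem eLpNorm_apply_ne_top_of_mixed_ne_top (hW_sa : ∀ᵐ x ∂ν, IsSelfAdjoint (W x))
    (hWinv_sa : ∀ᵐ x ∂ν, IsSelfAdjoint (Winv x)) (hinv : ∀ᵐ x ∂ν, W x * Winv x = 1)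
    (hq : q ≠ 0) (hfin : eLpNorm (fun x => eLpNorm (fun y => W x * Winv y) t ν) q ν ≠ ⊤) (u : V) :
    eLpNorm (fun y => Winv y u) t ν ≠ ⊤ := by
  obtain ⟨x₀, hx₀_fin, hx₀_sa, hx₀_inv⟩ :=
    ((frequently_ne_top_of_eLpNorm_ne_top hq hfin).and_eventually (hW_sa.and hinv)).exists
  have hswap : eLpNorm (fun y => Winv y * W x₀) t ν = eLpNorm (fun y => W x₀ * Winv y) t ν :=
    eLpNorm_congr_enorm_ae (hWinv_sa.mono fun y hy => hy.enorm_mul_comm hx₀_sa)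
  have hfactor : (fun y => Winv y u) = fun y => (Winv y * W x₀) (Winv x₀ u) := by
    have : W x₀ (Winv x₀ u) = u := by simpa using congr($hx₀_inv u)
    simp [this]
  refine ne_top_of_le_ne_top ?_ (hfactor ▸ eLpNorm_apply_le (fun y => Winv y * W x₀) (Winv x₀ u))
  rw [hswap]
  exact ENNReal.mul_ne_top hx₀_fin enorm_ne_top

theorem eLpNorm_eLpNorm_inv_mul_le (hWinv : AEStronglyMeasurable Winv ν)
    (hW_sa : ∀ᵐ x ∂ν, IsSelfAdjoint (W x))
    (hWinv_sa : ∀ᵐ x ∂ν, IsSelfAdjoint (Winv x)) (hinv : ∀ᵐ x ∂ν, W x * Winv x = 1)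
    (ht : t ≠ 0) (hq : q ≠ 0) {κ : ℝ≥0} (hκ : LpAddConst t ≤ κ)
    (hfin : eLpNorm (fun x => eLpNorm (fun y => W x * Winv y) t ν) q ν ≠ ⊤) :
    eLpNorm (fun x => eLpNorm (fun y => Winv x * W y) q ν) t ν ≤
      (2 * finrank ℝ V ^ 3 * κ ^ (2 * finrank ℝ V) : ℝ≥0) *
        eLpNorm (fun x => eLpNorm (fun y => W x * Winv y) t ν) q ν := by
  set n := finrank ℝ V
  have hinj : ∀ᵐ y ∂ν, Function.Injective (Winv y) := hinv.mono fun y hy =>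
    Function.LeftInverse.injective (g := W y) fun w => by simpa using congr($hy w)
  obtain ⟨K, hK_unit, hK⟩ := exists_reducingOperator hWinv hinj ht hκ
    (eLpNorm_apply_ne_top_of_mixed_ne_top hW_sa hWinv_sa hinv hq hfin)
  set K' : V →L[ℝ] V := ↑hK_unit.unit⁻¹
  set N := eLpNorm (fun y => W y * star K) q ν
  have hsplit : ∀ᵐ x ∂ν, eLpNorm (fun y => Winv x * W y) q ν ≤ N * ‖star K' * Winv x‖ₑ := by
    filter_upwards [hWinv_sa] with x hx
    rw [mul_comm]
    refine eLpNorm_le_mul_eLpNorm_of_ae_le_mul' (c := ‖star K' * Winv x‖₊) ?_ q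
    filter_upwards [hW_sa] with y hy
    exact (hx.enorm_mul_le_mul_star hy hK_unit.val_inv_mul).trans_eq (mul_comm _ _)
  have hK'_bound : eLpNorm (fun x => star K' * Winv x) t ν ≤ (n * κ ^ n : ℝ≥0) := by
    calc eLpNorm (fun x => star K' * Winv x) t ν = eLpNorm (fun x => Winv x * K') t ν :=
          eLpNorm_congr_enorm_ae (hWinv_sa.mono fun x hx => by
            simpa [hx.star_eq] using enorm_star_mul_star K' (Winv x))
      _ ≤ (n * κ ^ n : ℝ≥0) * ‖K * K'‖ₑ := (hK K').2
      _ ≤ (n * κ ^ n : ℝ≥0) := by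
          rw [hK_unit.mul_val_inv]
          refine mul_le_of_le_one_right' ?_
          rw [← ofReal_norm]
          exact ENNReal.ofReal_le_one.mpr ContinuousLinearMap.norm_id_le
  have hN_bound : N ≤ (2 * n ^ 2 * κ ^ n : ℝ≥0) *
      eLpNorm (fun y => eLpNorm (fun x => W y * Winv x) t ν) q ν := by
    refine eLpNorm_le_mul_eLpNorm_of_ae_le_mul' ?_ q
    filter_upwards [hW_sa] with y hy
    calc ‖W y * star K‖ₑ = ‖K * W y‖ₑ := by simpa [hy.star_eq] using enorm_star_mul_star (W y) K
      _ ≤ (2 * n ^ 2 * κ ^ n : ℝ≥0) * eLpNorm (fun x => Winv x * W y) t ν := (hK (W y)).1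
      _ = (2 * n ^ 2 * κ ^ n : ℝ≥0) * ‖eLpNorm (fun x => W y * Winv x) t ν‖ₑ := by
          rw [eLpNorm_congr_enorm_ae (hWinv_sa.mono fun x hx => hx.enorm_mul_comm hy)]
          rfl
  calc eLpNorm (fun x => eLpNorm (fun y => Winv x * W y) q ν) t ν
      ≤ N * eLpNorm (fun x => star K' * Winv x) t ν :=
        eLpNorm_le_mul_eLpNorm_of_ae_le_mul'' t (hWinv.const_mul _) hsplit
    _ ≤ (2 * n ^ 2 * κ ^ n : ℝ≥0) * eLpNorm (fun y => eLpNorm (fun x => W y * Winv x) t ν) q ν *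
          (n * κ ^ n : ℝ≥0) := by gcongr
    _ = _ := by push_cast; ring

end Swap

theorem avgLp_eq_eLpNorm {α : Type*} [MeasurableSpace α] {ν : Measure α} {t : ℝ≥0∞}
    (ht : t ≠ 0) (g : α → ℝ≥0∞) : avgLp ν t g = eLpNorm g t ν := by
  unfold avgLp
  split_ifs with htop
  · subst htop
    rfl
  · rw [eLpNorm_eq_eLpNorm' ht htop]
    rfl

theorem avgLp_avgLp_nnnorm {α E : Type*} [MeasurableSpace α] [NormedAddCommGroup E]
    {ν : Measure α} {t q : ℝ≥0∞} (ht : t ≠ 0) (hq : q ≠ 0) (f : α → α → E) :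
    avgLp ν q (fun x => avgLp ν t fun y => (‖f x y‖₊ : ℝ≥0∞)) =
      eLpNorm (fun x => eLpNorm (fun y => f x y) t ν) q ν := by
  simp only [avgLp_eq_eLpNorm ht, avgLp_eq_eLpNorm hq, ← enorm_eq_nnnorm, eLpNorm_enorm]

section Cubes

variable {d : ℕ}

theorem cube_eq_Icc (a : Fin d → ℝ) (ℓ : ℝ) : cube a ℓ = Set.Icc a (a + fun _ => ℓ) := by
  ext x
  simp [cube, Pi.le_def, forall_and]

theorem isProbabilityMeasure_cubeAvg (a : Fin d → ℝ) {ℓ : ℝ} (hℓ : 0 < ℓ) :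
    IsProbabilityMeasure (cubeAvg a ℓ) := by
  have hvol : volume (cube a ℓ) = ENNReal.ofReal ℓ ^ d := by
    simp [cube_eq_Icc, Real.volume_Icc_pi]
  exact ProbabilityTheory.cond_isProbabilityMeasure_of_finite (by simp [hvol, hℓ])
    (by simp [hvol])

theorem cubeAvg_absolutelyContinuous (a : Fin d → ℝ) (ℓ : ℝ) : cubeAvg a ℓ ≪ volume :=
  ProbabilityTheory.cond_absolutelyContinuous

theorem twoChar_le_mul_twoChar {A B : (Fin d → ℝ) → (Fin d → ℝ) → ℝ≥0∞} {t q t' q' C : ℝ≥0∞}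
    (hB : twoChar B t' q' ≠ ⊤)
    (h : ∀ a ℓ, 0 < ℓ →
      avgLp (cubeAvg a ℓ) q' (fun x => avgLp (cubeAvg a ℓ) t' fun y => B x y) ≠ ⊤ →
      avgLp (cubeAvg a ℓ) q (fun x => avgLp (cubeAvg a ℓ) t fun y => A x y) ≤
        C * avgLp (cubeAvg a ℓ) q' (fun x => avgLp (cubeAvg a ℓ) t' fun y => B x y)) :
    twoChar A t q ≤ C * twoChar B t' q' := by
  refine iSup₂_le fun a ℓ => iSup_le fun hℓ => ?_
  have hcube : avgLp (cubeAvg a ℓ) q' (fun x => avgLp (cubeAvg a ℓ) t' fun y => B x y) ≤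
      twoChar B t' q' := le_iSup₂_of_le a ℓ (le_iSup_of_le hℓ le_rfl)
  exact (h a ℓ hℓ (ne_top_of_le_ne_top hB hcube)).trans (mul_le_mul_right hcube C)

end Cubes

theorem twoChar_inv_mul_le {d : ℕ} {V : Type*} [NormedAddCommGroup V] [InnerProductSpace ℝ V]
    [FiniteDimensional ℝ V] {W Winv : (Fin d → ℝ) → V →L[ℝ] V} {t q : ℝ≥0∞} {κ : ℝ≥0}
    (hWinv : StronglyMeasurable Winv) (hW_sa : ∀ᵐ x, IsSelfAdjoint (W x))
    (hWinv_sa : ∀ᵐ x, IsSelfAdjoint (Winv x)) (hinv : ∀ᵐ x, W x * Winv x = 1)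
    (ht : t ≠ 0) (hq : q ≠ 0) (hκ : LpAddConst t ≤ κ)
    (hfin : twoChar (fun x y => (‖(W x).comp (Winv y)‖₊ : ℝ≥0∞)) t q ≠ ⊤) :
    twoChar (fun x y => (‖(Winv x).comp (W y)‖₊ : ℝ≥0∞)) q t ≤
      (2 * finrank ℝ V ^ 3 * κ ^ (2 * finrank ℝ V) : ℝ≥0) *
        twoChar (fun x y => (‖(W x).comp (Winv y)‖₊ : ℝ≥0∞)) t q := by
  refine twoChar_le_mul_twoChar hfin fun a ℓ hℓ hcube => ?_
  have := isProbabilityMeasure_cubeAvg a hℓ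
  have hac := cubeAvg_absolutelyContinuous a ℓ
  rw [avgLp_avgLp_nnnorm ht hq] at hcube ⊢
  rw [avgLp_avgLp_nnnorm hq ht]
  exact eLpNorm_eLpNorm_inv_mul_le hWinv.aestronglyMeasurable (hac.ae_le hW_sa)
    (hac.ae_le hWinv_sa) (hac.ae_le hinv) ht hq hκ hcube

theorem twoChar_symmetry_general {d : ℕ} {V : Type*} [NormedAddCommGroup V]
    [InnerProductSpace ℝ V] [FiniteDimensional ℝ V]
    (ir σ : ℝ) :
    ∃ C : ℝ≥0∞, 0 < C ∧ C < ⊤ ∧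
      ∀ ip : ℝ, 0 ≤ ip → ip ≤ ir → σ ≤ ip →
      ∀ t q th qh : ℝ≥0∞,
        t⁻¹ = ENNReal.ofReal (ir - ip) → q⁻¹ = ENNReal.ofReal (ip - σ) →
        th⁻¹ = ENNReal.ofReal (ip - σ) → qh⁻¹ = ENNReal.ofReal (ir - ip) →
      ∀ W Winv : (Fin d → ℝ) → (V →L[ℝ] V),
        StronglyMeasurable W → StronglyMeasurable Winv →
        (∀ᵐ x : Fin d → ℝ, ∀ u v : V, ⟪W x u, v⟫ = ⟪u, W x v⟫) →
        (∀ᵐ x : Fin d → ℝ, ∀ u : V, u ≠ 0 → 0 < ⟪W x u, u⟫) →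
        (∀ᵐ x : Fin d → ℝ, (Winv x).comp (W x) = ContinuousLinearMap.id ℝ V ∧
          (W x).comp (Winv x) = ContinuousLinearMap.id ℝ V) →
        twoChar (fun x y => (‖(W x).comp (Winv y)‖₊ : ℝ≥0∞)) t q < ⊤ →
          twoChar (fun x y => (‖(Winv x).comp (W y)‖₊ : ℝ≥0∞)) th qh < ⊤ ∧
          twoChar (fun x y => (‖(Winv x).comp (W y)‖₊ : ℝ≥0∞)) th qh
            ≤ C * twoChar (fun x y => (‖(W x).comp (Winv y)‖₊ : ℝ≥0∞)) t q ∧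
          twoChar (fun x y => (‖(W x).comp (Winv y)‖₊ : ℝ≥0∞)) t q
            ≤ C * twoChar (fun x y => (‖(Winv x).comp (W y)‖₊ : ℝ≥0∞)) th qh := by
  set n := finrank ℝ V
  set B := max ir (ir - σ)
  set C : ℝ≥0 := 2 * n ^ 3 * ((2 : ℝ≥0) ^ B) ^ (2 * n)
  -- `C` vanishes when `V = 0`; adding `1` keeps the constant positive
  refine ⟨C + 1, by positivity, by simp, fun ip hip0 hipr hσip t q th qh ht hq hth hqh
    W Winv hWm hWinvm hsym _ hinv hfin => ?_⟩
  obtain rfl : q = th := inv_injective (hq.trans hth.symm)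
  obtain rfl : t = qh := inv_injective (ht.trans hqh.symm)
  have ht0 : t ≠ 0 := fun h => by simp [h] at ht
  have hq0 : q ≠ 0 := fun h => by simp [h] at hq
  have hκ : ∀ {p : ℝ≥0∞} {c : ℝ}, c ≤ B → p⁻¹ = ENNReal.ofReal c →
      LpAddConst p ≤ ((2 : ℝ≥0) ^ B : ℝ≥0) := fun hc hp => by
    rw [ENNReal.coe_rpow_of_ne_zero two_ne_zero]
    exact LpAddConst_le_two_rpow (le_max_of_le_left (hip0.trans hipr))
      (hp.trans_le (ENNReal.ofReal_le_ofReal hc))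
  have hW_sa : ∀ᵐ x, IsSelfAdjoint (W x) :=
    hsym.mono fun x hx => ContinuousLinearMap.isSelfAdjoint_iff_isSymmetric.mpr hx
  have hWinv_sa : ∀ᵐ x, IsSelfAdjoint (Winv x) :=
    (hW_sa.and hinv).mono fun x hx => hx.1.of_mul_eq_one hx.2.2
  have h₁ := twoChar_inv_mul_le hWinvm hW_sa hWinv_sa (hinv.mono fun x hx => hx.2) ht0 hq0
    (hκ (by linarith [le_max_left ir (ir - σ)]) ht) hfin.ne
  have hC : (C : ℝ≥0∞) ≤ C + 1 := le_self_add
  have h₁' := h₁.trans (mul_le_mul_left hC _)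
  have h₂ := twoChar_inv_mul_le hWm hWinv_sa hW_sa (hinv.mono fun x hx => hx.1) hq0 ht0
    (hκ (by linarith [le_max_right ir (ir - σ)]) hq) (h₁.trans_lt (mul_lt_top coe_lt_top hfin)).ne
  exact ⟨h₁'.trans_lt (mul_lt_top (by simp) hfin), h₁', h₂.trans (mul_le_mul_left hC _)⟩

/-- **Symmetry of the two-parameter matrix Muckenhoupt condition.**
Let `p ∈ (0,∞]`, `r ∈ (0,∞)`, `s ∈ (ℝ∖{0}) ∪ {∞}` with `p ≥ r`, `1/p ≥ 1/s` (encoded through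
the reciprocals `ip = 1/p`, `ir = 1/r`, `σ = 1/s`, with exponents `t, q` given by
`1/t = 1/r − 1/p`, `1/q = 1/p − 1/s`).  Set `1/p̂ = 1/r + 1/s − 1/p`, whose associated exponents
are `t̂, q̂` with `1/t̂ = 1/r − 1/p̂ = 1/p − 1/s` and `1/q̂ = 1/p̂ − 1/s = 1/r − 1/p`.  If
`[W]_{p,(r,s),op} < ∞` then `[W⁻¹]_{p̂,(r,s),op} < ∞`, and the two characteristics are
comparable with constants depending only on `r`, `s`, `d` and `dim H`. -/
theorem twoChar_symmetry {d : ℕ} {V : Type*} [NormedAddCommGroup V]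
    [InnerProductSpace ℝ V] [FiniteDimensional ℝ V]
    (ir σ : ℝ) (hr : 0 < ir) :
    ∃ C : ℝ≥0∞, 0 < C ∧ C < ⊤ ∧
      ∀ ip : ℝ, 0 ≤ ip → ip ≤ ir → σ ≤ ip →
      ∀ t q th qh : ℝ≥0∞,
        t⁻¹ = ENNReal.ofReal (ir - ip) → q⁻¹ = ENNReal.ofReal (ip - σ) →
        th⁻¹ = ENNReal.ofReal (ip - σ) → qh⁻¹ = ENNReal.ofReal (ir - ip) →
      ∀ W Winv : (Fin d → ℝ) → (V →L[ℝ] V),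
        StronglyMeasurable W → StronglyMeasurable Winv →
        (∀ᵐ x : Fin d → ℝ, ∀ u v : V, ⟪W x u, v⟫ = ⟪u, W x v⟫) →
        (∀ᵐ x : Fin d → ℝ, ∀ u : V, u ≠ 0 → 0 < ⟪W x u, u⟫) →
        (∀ᵐ x : Fin d → ℝ, (Winv x).comp (W x) = ContinuousLinearMap.id ℝ V ∧
          (W x).comp (Winv x) = ContinuousLinearMap.id ℝ V) →
        twoChar (fun x y => (‖(W x).comp (Winv y)‖₊ : ℝ≥0∞)) t q < ⊤ →
          twoChar (fun x y => (‖(Winv x).comp (W y)‖₊ : ℝ≥0∞)) th qh < ⊤ ∧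
          twoChar (fun x y => (‖(Winv x).comp (W y)‖₊ : ℝ≥0∞)) th qh
            ≤ C * twoChar (fun x y => (‖(W x).comp (Winv y)‖₊ : ℝ≥0∞)) t q ∧
          twoChar (fun x y => (‖(W x).comp (Winv y)‖₊ : ℝ≥0∞)) t q
            ≤ C * twoChar (fun x y => (‖(Winv x).comp (W y)‖₊ : ℝ≥0∞)) th qh :=
  twoChar_symmetry_general ir σ
end

section
/- Let S be an η-sparse family of cubes in ℝ^d for some 0 < η < 1 and let F_j ∈ L¹_c(ℝ^d; K(H_j)) for j = 1,…,m (compactly supported, integrably bounded convex-set valued maps). Then for a.e. x ∈ ℝ^d, the Minkowski sum Σ_{Q∈S} K( ⊗_{j=1}^m ⟨F_j⟩_Q ) 1_Q(x) is a well-defined bounded, convex, symmetric subset of ⊗_j H_j; equivalently, Σ_{Q∈S} ∏_{j=1}^m ‖⟨F_j⟩_Q‖ 1_Q(x) < ∞ for a.e. x. -/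
open MeasureTheory ENNReal

/-- The smallest closed convex symmetric set containing `S` (real scalars). -/
def symmHull {E : Type*} [NormedAddCommGroup E] [NormedSpace ℝ E] (S : Set E) : Set E :=
  closure (convexHull ℝ (S ∪ -S))

/-- The Aumann average `⟨F⟩_Q` of a set-valued map over a set `Q`: all averages of integrable
selections of `F` on `Q`. -/
def aumAvg {d : ℕ} {E : Type*} [NormedAddCommGroup E] [NormedSpace ℝ E]
    (Q : Set (Fin d → ℝ)) (F : (Fin d → ℝ) → Set E) : Set E :=
  {v | ∃ f : (Fin d → ℝ) → E, IntegrableOn f Q volume ∧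
    (∀ᵐ x ∂volume.restrict Q, f x ∈ F x) ∧ v = (volume Q).toReal⁻¹ • ∫ x in Q, f x}

/-- The elementary tensor map `(u_1,…,u_m) ↦ u_1 ⊗ ⋯ ⊗ u_m`, realized in coordinates on
`EuclideanSpace ℝ (∀ j, ι j) ≅ ⨂_j EuclideanSpace ℝ (ι j)`. -/
def tensVec {m : ℕ} {ι : Fin m → Type*} [∀ j, Fintype (ι j)]
    (u : ∀ j, EuclideanSpace ℝ (ι j)) : EuclideanSpace ℝ (∀ j, ι j) :=
  WithLp.toLp 2 (fun k => ∏ j, u j (k j))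

/-- The set of elementary tensors `⊗_j S_j` of an `m`-tuple of sets. -/
def tensSet {m : ℕ} {ι : Fin m → Type*} [∀ j, Fintype (ι j)]
    (S : ∀ j, Set (EuclideanSpace ℝ (ι j))) : Set (EuclideanSpace ℝ (∀ j, ι j)) :=
  {v | ∃ u : ∀ j, EuclideanSpace ℝ (ι j), (∀ j, u j ∈ S j) ∧ v = tensVec u}

/-- The Kronecker (tensor) product of the square matrices `M j`. -/
def kron {m : ℕ} {ι : Fin m → Type*} (M : ∀ j, Matrix (ι j) (ι j) ℝ) :
    Matrix (∀ j, ι j) (∀ j, ι j) ℝ :=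
  Matrix.of fun k l => ∏ j, M j (k j) (l j)

/-!
Each Aumann average `⟨F_j⟩_Q` is bounded by the average over `Q` of the integrable majorant
`g_j x = sup_{u ∈ F_j x} ‖u‖`, so the term of a cube `Q_i` is at most `|Q_i|^{-m} ∏_j ‖g_j‖₁`;
it vanishes unless `Q_i` meets the ball `B(0, R)` outside which `F_1 = {0}`. The cubes meeting
that ball with side `ℓ_i ≥ 1` satisfy `E_i ⊆ B(0, R + ℓ_i)`, whence
`|Q_i|^{-1} ≲ η⁻¹ ∫_{E_i} (1 + |y|)^{-2d} dy`; as the `E_i` are disjoint, their terms have a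
finite sum. Those with side `ℓ_i < 1` lie in `B(0, R + 1)`, so `∑ |Q_i| ≤ η⁻¹ |B(0, R + 1)|`,
and by Borel–Cantelli almost every point lies in only finitely many of them.
-/

open Metric Set Function

lemma cube_eq_pi {d : ℕ} (a : Fin d → ℝ) (ℓ : ℝ) :
    cube a ℓ = univ.pi fun i => Icc (a i) (a i + ℓ) := by
  ext x; simp [cube, Pi.le_def, forall_and]

lemma measurableSet_cube {d : ℕ} (a : Fin d → ℝ) (ℓ : ℝ) : MeasurableSet (cube a ℓ) := by
  rw [cube_eq_pi]; exact MeasurableSet.univ_pi fun i => measurableSet_Icc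

lemma volume_cube {d : ℕ} (a : Fin d → ℝ) (ℓ : ℝ) :
    volume (cube a ℓ) = ENNReal.ofReal ℓ ^ d := by
  rw [cube_eq_pi, volume_pi_pi]
  simp [Real.volume_Icc]

lemma dist_le_of_mem_cube {d : ℕ} {a x y : Fin d → ℝ} {ℓ : ℝ} (hℓ : 0 ≤ ℓ)
    (hx : x ∈ cube a ℓ) (hy : y ∈ cube a ℓ) : dist x y ≤ ℓ := by
  refine (dist_pi_le_iff hℓ).2 fun k => ?_
  obtain ⟨hx₁, hx₂⟩ := hx k
  obtain ⟨hy₁, hy₂⟩ := hy k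
  rw [Real.dist_eq, abs_sub_le_iff]
  constructor <;> linarith

lemma cube_subset_closedBall_of_not_disjoint {d : ℕ} {a z : Fin d → ℝ} {ℓ r : ℝ} (hℓ : 0 ≤ ℓ)
    (h : ¬Disjoint (cube a ℓ) (closedBall z r)) : cube a ℓ ⊆ closedBall z (r + ℓ) := by
  obtain ⟨y, hyQ, hyB⟩ := not_disjoint_iff.mp h
  intro x hx
  rw [mem_closedBall] at hyB ⊢
  linarith [dist_triangle x y z, dist_le_of_mem_cube hℓ hx hyQ]

lemma inv_volume_cube_le_setLIntegral {d : ℕ} {a : Fin d → ℝ} {ℓ η b : ℝ} {E : Set (Fin d → ℝ)}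
    (hℓ : 0 < ℓ) (hη : 0 < η) (hb : 0 < b) (hEm : MeasurableSet E)
    (hE : ENNReal.ofReal η * volume (cube a ℓ) ≤ volume E) (hEb : ∀ y ∈ E, 1 + ‖y‖ ≤ b * ℓ) :
    (volume (cube a ℓ))⁻¹ ≤
      ENNReal.ofReal (b ^ (2 * d) / η) *
        ∫⁻ y in E, ENNReal.ofReal ((1 + ‖y‖) ^ (-(2 * d : ℝ))) := by
  have hw : ∀ y ∈ E, ENNReal.ofReal ((b * ℓ) ^ (2 * d))⁻¹ ≤
      ENNReal.ofReal ((1 + ‖y‖) ^ (-(2 * d : ℝ))) := by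
    intro y hy
    rw [Real.rpow_neg (by positivity), show (2 * d : ℝ) = ((2 * d : ℕ) : ℝ) by push_cast; ring,
      Real.rpow_natCast]
    gcongr
    exact hEb y hy
  have hlow : ENNReal.ofReal (η * ℓ ^ d * ((b * ℓ) ^ (2 * d))⁻¹) ≤
      ∫⁻ y in E, ENNReal.ofReal ((1 + ‖y‖) ^ (-(2 * d : ℝ))) := calc
    _ = ENNReal.ofReal η * volume (cube a ℓ) * ENNReal.ofReal ((b * ℓ) ^ (2 * d))⁻¹ := by
        rw [volume_cube, ← ENNReal.ofReal_pow hℓ.le, ← ENNReal.ofReal_mul hη.le,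
          ← ENNReal.ofReal_mul (by positivity)]
    _ ≤ ∫⁻ y in E, ENNReal.ofReal ((b * ℓ) ^ (2 * d))⁻¹ := by
        rw [setLIntegral_const, mul_comm]; gcongr
    _ ≤ _ := setLIntegral_mono' hEm hw
  calc (volume (cube a ℓ))⁻¹
      = ENNReal.ofReal (b ^ (2 * d) / η) * ENNReal.ofReal (η * ℓ ^ d * ((b * ℓ) ^ (2 * d))⁻¹) := by
        rw [volume_cube, ← ENNReal.ofReal_pow hℓ.le, ← ENNReal.ofReal_inv_of_pos (by positivity),
          ← ENNReal.ofReal_mul (by positivity)]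
        congr 1
        field_simp
        ring
    _ ≤ _ := by gcongr

lemma iSup_nnnorm_aumAvg_le {d : ℕ} {E : Type*} [NormedAddCommGroup E] [NormedSpace ℝ E]
    (Q : Set (Fin d → ℝ)) (F : (Fin d → ℝ) → Set E) :
    (⨆ v ∈ aumAvg Q F, (‖v‖₊ : ℝ≥0∞)) ≤
      (volume Q)⁻¹ * ∫⁻ x in Q, ⨆ u ∈ F x, (‖u‖₊ : ℝ≥0∞) := by
  refine iSup₂_le fun v ⟨f, _, hfF, hv⟩ => ?_
  subst hv
  calc (‖(volume Q).toReal⁻¹ • ∫ x in Q, f x‖₊ : ℝ≥0∞)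
      = ENNReal.ofReal (volume Q)⁻¹.toReal * ‖∫ x in Q, f x‖ₑ := by
        rw [enorm_eq_nnnorm, ← enorm_eq_nnnorm, enorm_smul, ENNReal.toReal_inv,
          Real.enorm_of_nonneg (by positivity)]
        rfl
    _ ≤ (volume Q)⁻¹ * ∫⁻ x in Q, ‖f x‖ₑ :=
        mul_le_mul' ofReal_toReal_le (enorm_integral_le_lintegral_enorm _)
    _ ≤ (volume Q)⁻¹ * ∫⁻ x in Q, ⨆ u ∈ F x, (‖u‖₊ : ℝ≥0∞) :=
        mul_le_mul' le_rfl <| lintegral_mono_ae <| hfF.mono fun x hx =>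
          le_iSup₂ (f := fun u (_ : u ∈ F x) => (‖u‖₊ : ℝ≥0∞)) (f x) hx

lemma prod_inv_mul_setLIntegral_le {α J : Type*} [MeasurableSpace α] [Fintype J] [Nonempty J]
    {μ : Measure α} {s : Set α} (hs : 1 ≤ μ s) (g : J → α → ℝ≥0∞) :
    ∏ j, (μ s)⁻¹ * ∫⁻ x in s, g j x ∂μ ≤ (μ s)⁻¹ * ∏ j, ∫⁻ x, g j x ∂μ := by
  rw [Finset.prod_mul_distrib, Finset.prod_const, Finset.card_univ]
  gcongr
  · exact pow_le_of_le_one zero_le (ENNReal.inv_le_one.mpr hs) Fintype.card_ne_zero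
  · exact Measure.restrict_le_self

lemma tsum_setLIntegral_le_lintegral {α ι : Type*} [MeasurableSpace α] [Countable ι]
    {μ : Measure α} {E : ι → Set α} (hEm : ∀ i, MeasurableSet (E i))
    (hEd : Pairwise (Disjoint on E)) (w : α → ℝ≥0∞) :
    ∑' i, ∫⁻ x in E i, w x ∂μ ≤ ∫⁻ x, w x ∂μ := by
  rw [← lintegral_iUnion hEm hEd]
  exact setLIntegral_le_lintegral _ _

lemma tsum_indicator_ne_top_of_finite {α ι : Type*} {s : ι → Set α} {a : ι → ℝ≥0∞} {x : α}
    (ha : ∀ i, a i ≠ ∞) (hx : {i | x ∈ s i}.Finite) :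
    ∑' i, (s i).indicator (fun _ => a i) x ≠ ∞ := by
  rw [tsum_eq_sum (s := hx.toFinset) fun i hi => indicator_of_notMem (by simpa using hi) _]
  refine ENNReal.sum_ne_top.2 fun i hi => ?_
  rw [indicator_of_mem (by simpa using hi)]
  exact ha i

lemma ae_tsum_indicator_ne_top {α ι : Type*} [MeasurableSpace α] [Countable ι] {μ : Measure α}
    {s : ι → Set α} {a : ι → ℝ≥0∞} (t : Set ι) (ha : ∀ i, a i ≠ ∞) (ht : ∑' i : t, a i ≠ ∞)
    (htc : ∑' i : ↥tᶜ, μ (s i) ≠ ∞) :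
    ∀ᵐ x ∂μ, ∑' i, (s i).indicator (fun _ => a i) x ≠ ∞ := by
  filter_upwards [ae_finite_setOfPred_mem htc] with x hx
  rw [← ENNReal.summable.tsum_add_tsum_compl (s := t) ENNReal.summable]
  refine ENNReal.add_ne_top.2 ⟨ne_top_of_le_ne_top ht ?_, ?_⟩
  · exact ENNReal.tsum_le_tsum fun i => indicator_le_self _ _ _
  · exact tsum_indicator_ne_top_of_finite (fun i => ha i) hx

structure IsSparseFamily {α ι : Type*} [MeasurableSpace α] (μ : Measure α) (η : ℝ)
    (Q E : ι → Set α) : Prop where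
  measurableSet : ∀ i, MeasurableSet (E i)
  subset : ∀ i, E i ⊆ Q i
  pairwise_disjoint : Pairwise (Disjoint on E)
  measure_le : ∀ i, ENNReal.ofReal η * μ (Q i) ≤ μ (E i)

namespace IsSparseFamily

variable {α ι κ : Type*} [MeasurableSpace α] {μ : Measure α} {η : ℝ} {Q E : ι → Set α}

lemma comp (hS : IsSparseFamily μ η Q E) {f : κ → ι} (hf : Injective f) :
    IsSparseFamily μ η (Q ∘ f) (E ∘ f) :=
  ⟨fun k => hS.measurableSet (f k), fun k => hS.subset (f k),
    hS.pairwise_disjoint.comp_of_injective hf, fun k => hS.measure_le (f k)⟩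

lemma tsum_measure_le [Countable ι] (hS : IsSparseFamily μ η Q E) (hη : 0 < η) {B : Set α}
    (hB : ∀ i, Q i ⊆ B) : ∑' i, μ (Q i) ≤ (ENNReal.ofReal η)⁻¹ * μ B := by
  have hη' : ENNReal.ofReal η ≠ 0 := (ENNReal.ofReal_pos.2 hη).ne'
  calc ∑' i, μ (Q i) ≤ ∑' i, (ENNReal.ofReal η)⁻¹ * μ (E i) :=
        ENNReal.tsum_le_tsum fun i =>
          (ENNReal.mul_le_iff_le_inv hη' ENNReal.ofReal_ne_top).1 (hS.measure_le i)
    _ = (ENNReal.ofReal η)⁻¹ * ∑' i, μ (E i) := ENNReal.tsum_mul_left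
    _ ≤ (ENNReal.ofReal η)⁻¹ * μ (⋃ i, E i) := by
        gcongr; exact tsum_meas_le_meas_iUnion_of_disjoint μ hS.measurableSet hS.pairwise_disjoint
    _ ≤ (ENNReal.ofReal η)⁻¹ * μ B := by
        gcongr; exact iUnion_subset fun i => (hS.subset i).trans (hB i)

end IsSparseFamily

lemma IsSparseFamily.tsum_inv_volume_cube_lt_top {d : ℕ} {ι : Type*} [Countable ι] {η R : ℝ}
    {c : ι → Fin d → ℝ} {L : ι → ℝ} {E : ι → Set (Fin d → ℝ)}
    (hS : IsSparseFamily volume η (fun i => cube (c i) (L i)) E) (hd : 0 < d) (hη : 0 < η)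
    (hL : ∀ i, 1 ≤ L i) (hball : ∀ i, cube (c i) (L i) ⊆ closedBall 0 (R + L i)) :
    ∑' i, (volume (cube (c i) (L i)))⁻¹ < ∞ := by
  set b := 2 + |R|
  have hEb : ∀ i, ∀ y ∈ E i, 1 + ‖y‖ ≤ b * L i := by
    intro i y hy
    have hy' := mem_closedBall_zero_iff.mp (hball i (hS.subset i hy))
    nlinarith [le_abs_self R, mul_le_mul_of_nonneg_left (hL i) (abs_nonneg R), hL i]
  have hw : ∫⁻ y : Fin d → ℝ, ENNReal.ofReal ((1 + ‖y‖) ^ (-(2 * d : ℝ))) < ∞ := by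
    refine finite_integral_one_add_norm ?_
    simp only [Module.finrank_fintype_fun_eq_card, Fintype.card_fin]
    have : (0 : ℝ) < d := by exact_mod_cast hd
    linarith
  calc ∑' i, (volume (cube (c i) (L i)))⁻¹
      ≤ ∑' i, ENNReal.ofReal (b ^ (2 * d) / η) *
          ∫⁻ y in E i, ENNReal.ofReal ((1 + ‖y‖) ^ (-(2 * d : ℝ))) :=
        ENNReal.tsum_le_tsum fun i => inv_volume_cube_le_setLIntegral (by linarith [hL i]) hη
          (by positivity) (hS.measurableSet i) (hS.measure_le i) (hEb i)
    _ = ENNReal.ofReal (b ^ (2 * d) / η) *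
          ∑' i, ∫⁻ y in E i, ENNReal.ofReal ((1 + ‖y‖) ^ (-(2 * d : ℝ))) := ENNReal.tsum_mul_left
    _ ≤ ENNReal.ofReal (b ^ (2 * d) / η) *
          ∫⁻ y, ENNReal.ofReal ((1 + ‖y‖) ^ (-(2 * d : ℝ))) := by
        gcongr
        exact tsum_setLIntegral_le_lintegral hS.measurableSet hS.pairwise_disjoint _
    _ < ∞ := ENNReal.mul_lt_top ENNReal.ofReal_lt_top hw

lemma IsSparseFamily.tsum_prod_average_cube_lt_top {d : ℕ} {ι J : Type*} [Countable ι]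
    [Fintype J] [Nonempty J] {η R : ℝ} {c : ι → Fin d → ℝ} {L : ι → ℝ} {E : ι → Set (Fin d → ℝ)}
    (hS : IsSparseFamily volume η (fun i => cube (c i) (L i)) E) (hd : 0 < d) (hη : 0 < η)
    (hL : ∀ i, 1 ≤ L i) (hball : ∀ i, cube (c i) (L i) ⊆ closedBall 0 (R + L i))
    {g : J → (Fin d → ℝ) → ℝ≥0∞} (hg : ∀ j, ∫⁻ x, g j x ≠ ∞) :
    ∑' i, ∏ j, (volume (cube (c i) (L i)))⁻¹ * ∫⁻ y in cube (c i) (L i), g j y < ∞ := by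
  have hvol (i : ι) : 1 ≤ volume (cube (c i) (L i)) := by
    rw [volume_cube]
    exact one_le_pow_of_one_le' (ENNReal.one_le_ofReal.2 (hL i)) d
  calc ∑' i, ∏ j, (volume (cube (c i) (L i)))⁻¹ * ∫⁻ y in cube (c i) (L i), g j y
      ≤ ∑' i, (volume (cube (c i) (L i)))⁻¹ * ∏ j, ∫⁻ x, g j x :=
        ENNReal.tsum_le_tsum fun i => prod_inv_mul_setLIntegral_le (hvol i) g
    _ = (∑' i, (volume (cube (c i) (L i)))⁻¹) * ∏ j, ∫⁻ x, g j x := ENNReal.tsum_mul_right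
    _ < ∞ := ENNReal.mul_lt_top (hS.tsum_inv_volume_cube_lt_top hd hη hL hball)
        (ENNReal.prod_lt_top fun j _ => (hg j).lt_top)

theorem IsSparseFamily.ae_tsum_indicator_prod_average_lt_top {d : ℕ} {ι J : Type*} [Countable ι]
    [Fintype J] {η R : ℝ} {c : ι → Fin d → ℝ} {L : ι → ℝ} {E : ι → Set (Fin d → ℝ)}
    (hS : IsSparseFamily volume η (fun i => cube (c i) (L i)) E) (hd : 0 < d) (hη : 0 < η)
    (hL : ∀ i, 0 < L i) {g : J → (Fin d → ℝ) → ℝ≥0∞} (hg : ∀ j, ∫⁻ x, g j x ≠ ∞) (j₀ : J)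
    (hg₀ : support (g j₀) ⊆ closedBall 0 R) :
    ∀ᵐ x, ∑' i, (cube (c i) (L i)).indicator
      (fun _ => ∏ j, (volume (cube (c i) (L i)))⁻¹ * ∫⁻ y in cube (c i) (L i), g j y) x < ∞ := by
  have : Nonempty J := ⟨j₀⟩
  set Q : ι → Set (Fin d → ℝ) := fun i => cube (c i) (L i)
  set T : ι → ℝ≥0∞ := fun i => ∏ j, (volume (Q i))⁻¹ * ∫⁻ y in Q i, g j y
  set near : Set ι := {i | ¬Disjoint (Q i) (closedBall 0 R)}
  show ∀ᵐ x, ∑' i, (Q i).indicator (fun _ => T i) x < ∞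
  have hT_ne_top (i : ι) : T i ≠ ∞ := by
    have hQ : volume (Q i) ≠ 0 := by
      simp only [Q, volume_cube]; exact pow_ne_zero _ (ENNReal.ofReal_pos.2 (hL i)).ne'
    exact ENNReal.prod_ne_top fun j _ => ENNReal.mul_ne_top (ENNReal.inv_ne_top.2 hQ)
      (ne_top_of_le_ne_top (hg j) (setLIntegral_le_lintegral _ _))
  have hT_far (i : ι) (hi : i ∉ near) : T i = 0 := by
    have hzero : ∫⁻ y in Q i, g j₀ y = 0 := setLIntegral_eq_zero (measurableSet_cube _ _)
      fun y hy => notMem_support.1 fun h => (not_not.1 hi).le_bot ⟨hy, hg₀ h⟩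
    exact Finset.prod_eq_zero (Finset.mem_univ j₀) (by rw [hzero, mul_zero])
  have hball (i : ι) (hi : i ∈ near) : Q i ⊆ closedBall 0 (R + L i) :=
    cube_subset_closedBall_of_not_disjoint (hL i).le hi
  set big : Set near := {k | 1 ≤ L k}
  have hbig : ∑' k : big, T k ≠ ∞ := by
    have hS' : IsSparseFamily volume η (fun k : big => cube (c k) (L k)) (fun k => E k) :=
      hS.comp (Subtype.val_injective.comp Subtype.val_injective)
    exact (hS'.tsum_prod_average_cube_lt_top hd hη (fun k => k.2) (fun k => hball k k.1.2) hg).ne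
  have hsmall : ∑' k : ↥bigᶜ, volume (Q k) ≠ ∞ := by
    have hS' : IsSparseFamily volume η (fun k : ↥bigᶜ => Q k) (fun k => E k) :=
      hS.comp (Subtype.val_injective.comp Subtype.val_injective)
    have hsub (k : ↥bigᶜ) : Q k ⊆ closedBall 0 (R + 1) :=
      (hball k k.1.2).trans <| closedBall_subset_closedBall <| by
        linarith [not_le.1 (show ¬1 ≤ L k from k.2)]
    have hη' : (ENNReal.ofReal η)⁻¹ ≠ ∞ := ENNReal.inv_ne_top.2 (ENNReal.ofReal_pos.2 hη).ne'
    exact ne_top_of_le_ne_top (ENNReal.mul_ne_top hη' measure_closedBall_lt_top.ne)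
      (hS'.tsum_measure_le hη hsub)
  filter_upwards [ae_tsum_indicator_ne_top (μ := volume) (s := fun k : near => Q k)
    (a := fun k : near => T k) big (fun k => hT_ne_top k) hbig hsmall] with x hx
  rw [← tsum_subtype_eq_of_support_subset (s := near)]
  · exact hx.lt_top
  · exact fun i hi => by_contra fun h => hi (by simp [hT_far i h])

theorem sparse_convex_body_sum_well_defined_general
    {d m : ℕ} (hd : 0 < d) (hm : 0 < m) (ι : Fin m → Type*)
    [∀ j, Fintype (ι j)]
    (η : ℝ) (hη0 : 0 < η)
    (N : Type) [Countable N] (c : N → (Fin d → ℝ)) (L : N → ℝ) (hL : ∀ i, 0 < L i)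
    (E : N → Set (Fin d → ℝ)) (hEm : ∀ i, MeasurableSet (E i))
    (hEsub : ∀ i, E i ⊆ cube (c i) (L i))
    (hEdisj : Pairwise fun i i' => Disjoint (E i) (E i'))
    (hEbig : ∀ i, ENNReal.ofReal η * volume (cube (c i) (L i)) ≤ volume (E i))
    (F : ∀ j, (Fin d → ℝ) → Set (EuclideanSpace ℝ (ι j)))
    (hsupp : ∀ j, ∃ R : ℝ, ∀ x : Fin d → ℝ, R < dist x 0 → F j x = {0})
    (hint : ∀ j, (∫⁻ x, ⨆ u ∈ F j x, (‖u‖₊ : ℝ≥0∞)) < ⊤) :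
    ∀ᵐ x : Fin d → ℝ,
      (∑' i : N, Set.indicator (cube (c i) (L i))
        (fun _ => ∏ j, ⨆ v ∈ aumAvg (cube (c i) (L i)) (F j), (‖v‖₊ : ℝ≥0∞)) x) < ⊤ := by
  obtain ⟨R, hR⟩ := hsupp ⟨0, hm⟩
  have hsupp₀ : support (fun x => ⨆ u ∈ F ⟨0, hm⟩ x, (‖u‖₊ : ℝ≥0∞)) ⊆ closedBall 0 R :=
    fun x hx => by_contra fun h => hx (by simp [hR x (not_le.1 h)])
  filter_upwards [IsSparseFamily.ae_tsum_indicator_prod_average_lt_top ⟨hEm, hEsub, hEdisj, hEbig⟩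
    hd hη0 hL (fun j => (hint j).ne) ⟨0, hm⟩ hsupp₀] with x hx
  refine lt_of_le_of_lt (ENNReal.tsum_le_tsum fun i => indicator_le_indicator ?_) hx
  exact Finset.prod_le_prod' fun j _ => iSup_nnnorm_aumAvg_le _ _

/-- **The multilinear convex body sparse operator is well defined** (Lemma 6.3).
Let `S = (Q_i)_{i}` be an `η`-sparse family of cubes in `ℝ^d` (there are pairwise disjoint
measurable sets `E_i ⊆ Q_i` with `|E_i| ≥ η|Q_i|`), and let `F_j ∈ L¹_c(ℝ^d; K(H_j))` be
compactly supported integrably bounded convex-set valued maps.  Then for a.e. `x ∈ ℝ^d` the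
Minkowski sum `Σ_i K(⊗_j ⟨F_j⟩_{Q_i}) 1_{Q_i}(x)` is a well-defined bounded convex symmetric
set; equivalently, `Σ_i ∏_j ‖⟨F_j⟩_{Q_i}‖ 1_{Q_i}(x) < ∞` for a.e. `x`. -/
theorem sparse_convex_body_sum_well_defined
    {d m : ℕ} (hd : 0 < d) (hm : 0 < m) (ι : Fin m → Type*)
    [∀ j, Fintype (ι j)] [∀ j, DecidableEq (ι j)] [∀ j, Nonempty (ι j)]
    (η : ℝ) (hη0 : 0 < η) (hη1 : η < 1)
    (N : Type) [Countable N] (c : N → (Fin d → ℝ)) (L : N → ℝ) (hL : ∀ i, 0 < L i)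
    (E : N → Set (Fin d → ℝ)) (hEm : ∀ i, MeasurableSet (E i))
    (hEsub : ∀ i, E i ⊆ cube (c i) (L i))
    (hEdisj : Pairwise fun i i' => Disjoint (E i) (E i'))
    (hEbig : ∀ i, ENNReal.ofReal η * volume (cube (c i) (L i)) ≤ volume (E i))
    (F : ∀ j, (Fin d → ℝ) → Set (EuclideanSpace ℝ (ι j)))
    (hne : ∀ j x, (F j x).Nonempty) (hcp : ∀ j x, IsCompact (F j x))
    (hconv : ∀ j x, Convex ℝ (F j x)) (hsym : ∀ j x, ∀ u ∈ F j x, -u ∈ F j x)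
    (hmeas : ∀ j, ∀ U : Set (EuclideanSpace ℝ (ι j)), IsOpen U →
      MeasurableSet {x | (F j x ∩ U).Nonempty})
    (hsupp : ∀ j, ∃ R : ℝ, ∀ x : Fin d → ℝ, R < dist x 0 → F j x = {0})
    (hint : ∀ j, (∫⁻ x, ⨆ u ∈ F j x, (‖u‖₊ : ℝ≥0∞)) < ⊤) :
    ∀ᵐ x : Fin d → ℝ,
      (∑' i : N, Set.indicator (cube (c i) (L i))
        (fun _ => ∏ j, ⨆ v ∈ aumAvg (cube (c i) (L i)) (F j), (‖v‖₊ : ℝ≥0∞)) x) < ⊤ :=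
  sparse_convex_body_sum_well_defined_general hd hm ι η hη0 N c L hL E hEm hEsub hEdisj hEbig F
    hsupp hint
end
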